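/- Let n > k and m > k be positive integers, and let v^n and v^m be the Galerkin approximations of orders n and m respectively. Then for every t ≥ 0: |Σ_{i=1}^m λ_i² v^m_i(t)² − Σ_{i=1}^n λ_i² v^n_i(t)²| ≤ 2·(H₀/ν₁)^{1/2}·(Σ_{i=1}^k λ_i² (v^n_i(t) − v^m_i(t))²)^{1/2} + 2·R_k(a,b)·L_k^+(t), where L_k^+(t) = (ν₂/ν₁)·exp(L H₀ λ_k t / ν₁²) and H₀ = Σ_i b_i² + M(Σ_i λ_i² a_i²). -/

import Mathlib

/-!
Write `|v|²_S = Σ_{i ∈ S} λ_i² v_i²` and split both sums at `k`. The energy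
`E = Σ v_i'² + M(|v|²)` of a Galerkin approximation is conserved, and `E(0) ≤ H₀`; since
`M(σ) ≥ μ₁ σ`, both low parts `|v|²_{≤k}` are at most `H₀/ν₁`, and Cauchy–Schwarz on
`λ_i² (w_i² - v_i²) = λ_i (v_i - w_i) · (-λ_i (v_i + w_i))` bounds their difference.

The high parts are controlled by the tail energy `F = Σ_{i>k} v_i'² + M(|v|²) - M(|v|²_{≤k})`,
which dominates `μ₁ |v|²_{>k}` and satisfies `F(0) ≤ ν₂ R_k`. The equations make the high modes
cancel from `F' = (m(|v|²) - m(|v|²_{≤k})) · (|v|²_{≤k})'`; the first factor is at most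
`L |v|²_{>k} ≤ L F / μ₁` and the second at most `λ_k H₀ / ν₁` (by `2ν₁|xy| ≤ μ₁x² + y²`
and monotonicity of `λ`), so Grönwall's inequality gives `F(t) ≤ ν₂ R_k exp(L H₀ λ_k t / ν₁²)`.
-/

open Filter Set

/-- Derivative from within the half line `[0, ∞)`. -/
noncomputable def derIci (f : ℝ → ℝ) : ℝ → ℝ := derivWithin f (Set.Ici (0 : ℝ))

/-- The pair `(a, b)` belongs to the energy space `D(A^{1/2}) × H`. -/
def InEnergy (lam a b : ℕ → ℝ) : Prop :=
  Summable fun i => (b i) ^ 2 + (lam i) ^ 2 * (a i) ^ 2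

/-- `R_k(a,b) = Σ_{i>k} (b_i² + λ_i² a_i²)`. -/
noncomputable def Rk (lam a b : ℕ → ℝ) (k : ℕ) : ℝ :=
  ∑' i : ℕ, if k < i then (b i) ^ 2 + (lam i) ^ 2 * (a i) ^ 2 else 0

/-- Lacunary (spectral gap) data: `R_k(a,b)·k²·exp(k λ_k) ≤ 1` for infinitely many
positive integers `k`. -/
def Lacunary (lam a b : ℕ → ℝ) : Prop :=
  InEnergy lam a b ∧
    {k : ℕ | 0 < k ∧
      Rk lam a b k * (k : ℝ) ^ 2 * Real.exp ((k : ℝ) * lam k) ≤ 1}.Infinite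

/-- `M(σ) = ∫₀^σ m(s) ds`. -/
noncomputable def Mfun (m : ℝ → ℝ) (σ : ℝ) : ℝ := ∫ s in (0:ℝ)..σ, m s

/-- The conserved quantity `H₀ = Σ_i b_i² + M(Σ_i λ_i² a_i²)`. -/
noncomputable def H0 (lam : ℕ → ℝ) (m : ℝ → ℝ) (a b : ℕ → ℝ) : ℝ :=
  (∑' i, (b i) ^ 2) + Mfun m (∑' i, (lam i) ^ 2 * (a i) ^ 2)

/-- Galerkin approximation of order `n` (components of index `> n` extended by zero):
the solution of `v_i'' + m(Σ_{j≤n} λ_j² v_j²) λ_i² v_i = 0` for `i ≤ n`, with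
`v_i(0) = a_i`, `v_i'(0) = b_i`. -/
def GalerkinSol (lam : ℕ → ℝ) (m : ℝ → ℝ) (a b : ℕ → ℝ) (n : ℕ)
    (v : ℕ → ℝ → ℝ) : Prop :=
  (∀ i, ContDiffOn ℝ 2 (v i) (Set.Ici 0)) ∧
  (∀ i ≤ n, v i 0 = a i) ∧
  (∀ i ≤ n, derIci (v i) 0 = b i) ∧
  (∀ i, n < i → ∀ t, v i t = 0) ∧
  (∀ i ≤ n, ∀ t, 0 ≤ t →
    derIci (derIci (v i)) t
      + m (∑ j ∈ Finset.range (n + 1), (lam j) ^ 2 * (v j t) ^ 2)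
        * (lam i) ^ 2 * v i t = 0)

/-- Global weak solution with initial data `(a,b)`: a family `v_i ∈ C²([0,∞))` with
`v_i(0) = a_i`, `v_i'(0) = b_i`, such that `Σ v_i'(t)²` and `Σ λ_i² v_i(t)²` converge,
the maps `t ↦ (v_i'(t))_i` and `t ↦ (λ_i v_i(t))_i` are continuous from `[0,∞)` into
`ℓ²`, and `v_i'' + m(Σ_j λ_j² v_j²) λ_i² v_i = 0` for every `i` and every `t ≥ 0`. -/
def WeakSol (lam : ℕ → ℝ) (m : ℝ → ℝ) (a b : ℕ → ℝ) (v : ℕ → ℝ → ℝ) : Prop :=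
  (∀ i, ContDiffOn ℝ 2 (v i) (Set.Ici 0)) ∧
  (∀ i, v i 0 = a i) ∧
  (∀ i, derIci (v i) 0 = b i) ∧
  (∀ t, 0 ≤ t → Summable fun i => (derIci (v i) t) ^ 2) ∧
  (∀ t, 0 ≤ t → Summable fun i => (lam i) ^ 2 * (v i t) ^ 2) ∧
  (∀ t₀, 0 ≤ t₀ → Tendsto (fun t => ∑' i, (derIci (v i) t - derIci (v i) t₀) ^ 2)
      (nhdsWithin t₀ (Set.Ici 0)) (nhds 0)) ∧
  (∀ t₀, 0 ≤ t₀ → Tendsto (fun t => ∑' i, (lam i) ^ 2 * (v i t - v i t₀) ^ 2)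
      (nhdsWithin t₀ (Set.Ici 0)) (nhds 0)) ∧
  (∀ i, ∀ t, 0 ≤ t →
    derIci (derIci (v i)) t
      + m (∑' j, (lam j) ^ 2 * (v j t) ^ 2) * (lam i) ^ 2 * v i t = 0)


section Primitive

variable {m : ℝ → ℝ} {x y : ℝ}

lemma intervalIntegrable_of_continuousOn_Ici (hm : ContinuousOn m (Ici 0)) (hx : 0 ≤ x)
    (hxy : x ≤ y) : IntervalIntegrable m MeasureTheory.volume x y :=
  (hm.mono fun s hs => le_trans hx (by rw [uIcc_of_le hxy] at hs; exact hs.1)).intervalIntegrable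

lemma Mfun_sub_Mfun (hm : ContinuousOn m (Ici 0)) (hx : 0 ≤ x) (hxy : x ≤ y) :
    Mfun m y - Mfun m x = ∫ s in x..y, m s :=
  intervalIntegral.integral_interval_sub_left
    (intervalIntegrable_of_continuousOn_Ici hm le_rfl (hx.trans hxy))
    (intervalIntegrable_of_continuousOn_Ici hm le_rfl hx)

lemma mul_sub_le_Mfun_sub {μ : ℝ} (hm : ContinuousOn m (Ici 0)) (hμ : ∀ σ, 0 ≤ σ → μ ≤ m σ)
    (hx : 0 ≤ x) (hxy : x ≤ y) : μ * (y - x) ≤ Mfun m y - Mfun m x := by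
  rw [Mfun_sub_Mfun hm hx hxy, mul_comm, ← smul_eq_mul, ← intervalIntegral.integral_const]
  exact intervalIntegral.integral_mono_on hxy intervalIntegrable_const
    (intervalIntegrable_of_continuousOn_Ici hm hx hxy) fun s hs => hμ s (hx.trans hs.1)

lemma Mfun_sub_le_mul_sub {μ : ℝ} (hm : ContinuousOn m (Ici 0)) (hμ : ∀ σ, 0 ≤ σ → m σ ≤ μ)
    (hx : 0 ≤ x) (hxy : x ≤ y) : Mfun m y - Mfun m x ≤ μ * (y - x) := by
  rw [Mfun_sub_Mfun hm hx hxy, mul_comm, ← smul_eq_mul, ← intervalIntegral.integral_const]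
  exact intervalIntegral.integral_mono_on hxy (intervalIntegrable_of_continuousOn_Ici hm hx hxy)
    intervalIntegrable_const fun s hs => hμ s (hx.trans hs.1)

lemma mul_le_Mfun {μ : ℝ} (hm : ContinuousOn m (Ici 0)) (hμ : ∀ σ, 0 ≤ σ → μ ≤ m σ)
    (hx : 0 ≤ x) : μ * x ≤ Mfun m x := by
  simpa [Mfun] using mul_sub_le_Mfun_sub hm hμ le_rfl hx

lemma hasDerivWithinAt_Mfun (hm : ContinuousOn m (Ici 0)) (hx : 0 ≤ x) :
    HasDerivWithinAt (Mfun m) (m x) (Ici 0) x := by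
  -- the fundamental theorem of calculus wants an integrand continuous on all of `ℝ`
  have hcont : Continuous fun s => m (max s 0) :=
    hm.comp_continuous (continuous_id.max continuous_const) fun s => le_max_right s 0
  have heq : EqOn (Mfun m) (fun y => ∫ s in (0:ℝ)..y, m (max s 0)) (Ici 0) := fun y hy =>
    intervalIntegral.integral_congr fun s hs => by
      rw [uIcc_of_le hy] at hs
      simp only [max_eq_left hs.1]
  have h := (hcont.integral_hasStrictDerivAt 0 x).hasDerivAt.hasDerivWithinAt (s := Ici 0)
  rw [max_eq_left hx] at h
  exact h.congr heq (heq hx)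

end Primitive

section Calculus

lemma eq_of_hasDerivWithinAt_Ici_zero {f : ℝ → ℝ}
    (hf : ∀ s, 0 ≤ s → HasDerivWithinAt f 0 (Ici 0) s) {t : ℝ} (ht : 0 ≤ t) : f t = f 0 :=
  constant_of_has_deriv_right_zero
    (fun r hr => ((hf r hr.1).continuousWithinAt).mono Icc_subset_Ici_self)
    (fun r hr => (hf r hr.1).mono (Ici_subset_Ici.mpr hr.1)) t ⟨ht, le_rfl⟩

lemma le_mul_exp_of_abs_deriv_le {f f' : ℝ → ℝ} {C t : ℝ}
    (hf : ∀ s, 0 ≤ s → HasDerivWithinAt f (f' s) (Ici 0) s) (hf0 : ∀ s, 0 ≤ s → 0 ≤ f s)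
    (bound : ∀ s, 0 ≤ s → |f' s| ≤ C * f s) (ht : 0 ≤ t) : f t ≤ f 0 * Real.exp (C * t) := by
  have h := norm_le_gronwallBound_of_norm_deriv_right_le (f := f) (f' := f') (ε := 0)
    (fun r hr => ((hf r hr.1).continuousWithinAt).mono Icc_subset_Ici_self)
    (fun r hr => (hf r hr.1).mono (Ici_subset_Ici.mpr hr.1)) le_rfl
    (fun r hr => by
      simpa [Real.norm_eq_abs, abs_of_nonneg (hf0 r hr.1)] using bound r hr.1) t ⟨ht, le_rfl⟩
  simpa [Real.norm_eq_abs, abs_of_nonneg (hf0 t ht), abs_of_nonneg (hf0 0 le_rfl),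
    gronwallBound_ε0] using h

lemma hasDerivWithinAt_derIci {f : ℝ → ℝ} (hf : ContDiffOn ℝ 2 f (Ici 0)) {s : ℝ} (hs : 0 ≤ s) :
    HasDerivWithinAt f (derIci f s) (Ici 0) s :=
  ((hf.differentiableOn (by norm_num)) s hs).hasDerivWithinAt

lemma hasDerivWithinAt_derIci_derIci {f : ℝ → ℝ} (hf : ContDiffOn ℝ 2 f (Ici 0)) {s : ℝ}
    (hs : 0 ≤ s) : HasDerivWithinAt (derIci f) (derIci (derIci f) s) (Ici 0) s :=
  (((hf.derivWithin (uniqueDiffOn_Ici 0) (by norm_num)).differentiableOn one_ne_zero)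
    s hs).hasDerivWithinAt

end Calculus

/-- Cauchy–Schwarz after factoring `y² - x² = (y - x)(y + x)`. -/
lemma abs_sum_sq_sub_sum_sq_le {ι : Type*} (S : Finset ι) (c x y : ι → ℝ) {H : ℝ}
    (hx : ∑ i ∈ S, (c i) ^ 2 * (x i) ^ 2 ≤ H) (hy : ∑ i ∈ S, (c i) ^ 2 * (y i) ^ 2 ≤ H) :
    |∑ i ∈ S, (c i) ^ 2 * (y i) ^ 2 - ∑ i ∈ S, (c i) ^ 2 * (x i) ^ 2|
      ≤ 2 * Real.sqrt H * Real.sqrt (∑ i ∈ S, (c i) ^ 2 * (x i - y i) ^ 2) := by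
  have hsum : ∑ i ∈ S, (c i * (x i + y i)) ^ 2 ≤ 2 ^ 2 * H := by
    have : ∀ i ∈ S, (c i * (x i + y i)) ^ 2
        ≤ 2 * ((c i) ^ 2 * (x i) ^ 2) + 2 * ((c i) ^ 2 * (y i) ^ 2) := fun i _ => by
      nlinarith [sq_nonneg (c i * (x i - y i))]
    have := Finset.sum_le_sum this
    rw [Finset.sum_add_distrib, ← Finset.mul_sum, ← Finset.mul_sum] at this
    linarith
  have hsqrt : Real.sqrt (∑ i ∈ S, (c i * (x i + y i)) ^ 2) ≤ 2 * Real.sqrt H := by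
    simpa [Real.sqrt_mul', Real.sqrt_sq] using Real.sqrt_le_sqrt hsum
  have hCS : ∀ σ : ℝ, σ ^ 2 = 1 →
      ∑ i ∈ S, (c i * (x i - y i)) * (σ * (c i * (x i + y i)))
        ≤ Real.sqrt (∑ i ∈ S, (c i) ^ 2 * (x i - y i) ^ 2) * (2 * Real.sqrt H) := fun σ hσ => by
    refine (Real.sum_mul_le_sqrt_mul_sqrt _ _ _).trans ?_
    simp only [mul_pow, hσ, one_mul]
    exact mul_le_mul_of_nonneg_left (by simpa only [mul_pow] using hsqrt) (Real.sqrt_nonneg _)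
  have hfac : ∑ i ∈ S, (c i) ^ 2 * (y i) ^ 2 - ∑ i ∈ S, (c i) ^ 2 * (x i) ^ 2
      = ∑ i ∈ S, (c i * (x i - y i)) * (-1 * (c i * (x i + y i))) := by
    rw [← Finset.sum_sub_distrib]
    exact Finset.sum_congr rfl fun i _ => by ring
  have hneg : ∑ i ∈ S, (c i * (x i - y i)) * (-1 * (c i * (x i + y i)))
      = -∑ i ∈ S, (c i * (x i - y i)) * (1 * (c i * (x i + y i))) := by
    rw [← Finset.sum_neg_distrib]
    exact Finset.sum_congr rfl fun i _ => by ring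
  rw [abs_le, hfac]
  constructor <;> linarith [hCS 1 (one_pow 2), hCS (-1) (by norm_num)]

section Sums

variable (lam : ℕ → ℝ) (v : ℕ → ℝ → ℝ)

noncomputable def potentialSum (S : Finset ℕ) (s : ℝ) : ℝ :=
  ∑ j ∈ S, (lam j) ^ 2 * (v j s) ^ 2

noncomputable def potentialSumDeriv (S : Finset ℕ) (s : ℝ) : ℝ :=
  ∑ j ∈ S, (lam j) ^ 2 * (2 * v j s * derIci (v j) s)

noncomputable def kineticSum (S : Finset ℕ) (s : ℝ) : ℝ :=
  ∑ j ∈ S, (derIci (v j) s) ^ 2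

variable {lam v}

lemma potentialSum_nonneg (S : Finset ℕ) (s : ℝ) : 0 ≤ potentialSum lam v S s :=
  Finset.sum_nonneg fun _ _ => by positivity

lemma kineticSum_nonneg (S : Finset ℕ) (s : ℝ) : 0 ≤ kineticSum v S s :=
  Finset.sum_nonneg fun _ _ => by positivity

lemma potentialSum_mono {S T : Finset ℕ} (h : S ⊆ T) (s : ℝ) :
    potentialSum lam v S s ≤ potentialSum lam v T s :=
  Finset.sum_le_sum_of_subset_of_nonneg h fun _ _ _ => by positivity

lemma kineticSum_mono {S T : Finset ℕ} (h : S ⊆ T) (s : ℝ) :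
    kineticSum v S s ≤ kineticSum v T s :=
  Finset.sum_le_sum_of_subset_of_nonneg h fun _ _ _ => by positivity

lemma potentialSum_range_add_Ico {k n : ℕ} (hkn : k ≤ n) (s : ℝ) :
    potentialSum lam v (Finset.range (k + 1)) s + potentialSum lam v (Finset.Ico (k + 1) (n + 1)) s
      = potentialSum lam v (Finset.range (n + 1)) s :=
  Finset.sum_range_add_sum_Ico _ (by omega)

lemma potentialSum_sub_potentialSum {k n : ℕ} (hkn : k ≤ n) (s : ℝ) :
    potentialSum lam v (Finset.range (n + 1)) s - potentialSum lam v (Finset.range (k + 1)) s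
      = potentialSum lam v (Finset.Ico (k + 1) (n + 1)) s := by
  rw [← potentialSum_range_add_Ico hkn s, add_sub_cancel_left]

lemma potentialSum_range_le {k n : ℕ} (hkn : k ≤ n) (s : ℝ) :
    potentialSum lam v (Finset.range (k + 1)) s ≤ potentialSum lam v (Finset.range (n + 1)) s :=
  potentialSum_mono (Finset.range_subset_range.mpr (Nat.succ_le_succ hkn)) s

lemma potentialSumDeriv_range_add_Ico {k n : ℕ} (hkn : k ≤ n) (s : ℝ) :
    potentialSumDeriv lam v (Finset.range (k + 1)) s
        + potentialSumDeriv lam v (Finset.Ico (k + 1) (n + 1)) s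
      = potentialSumDeriv lam v (Finset.range (n + 1)) s :=
  Finset.sum_range_add_sum_Ico _ (by omega)

lemma hasDerivWithinAt_potentialSum (hv : ∀ i, ContDiffOn ℝ 2 (v i) (Ici 0)) (S : Finset ℕ)
    {s : ℝ} (hs : 0 ≤ s) :
    HasDerivWithinAt (potentialSum lam v S) (potentialSumDeriv lam v S s) (Ici 0) s := by
  refine HasDerivWithinAt.fun_sum fun j _ =>
    (((hasDerivWithinAt_derIci (hv j) hs).fun_pow 2).const_mul ((lam j) ^ 2)).congr_deriv ?_
  norm_num

/-- Termwise `2 ν |λ v| |v'| ≤ ν² λ² v² + v'² ≤ μ λ² v² + v'²`. -/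
lemma mul_abs_potentialSumDeriv_le {S : Finset ℕ} {Λ μ ν : ℝ}
    (hlam : ∀ j ∈ S, 0 ≤ lam j ∧ lam j ≤ Λ) (hν : 0 ≤ ν) (hνμ : ν ^ 2 ≤ μ) (s : ℝ) :
    ν * |potentialSumDeriv lam v S s| ≤ Λ * (μ * potentialSum lam v S s + kineticSum v S s) := by
  rw [potentialSum, kineticSum, potentialSumDeriv, Finset.mul_sum, ← Finset.sum_add_distrib,
    Finset.mul_sum]
  refine (mul_le_mul_of_nonneg_left (Finset.abs_sum_le_sum_abs _ _) hν).trans ?_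
  rw [Finset.mul_sum]
  refine Finset.sum_le_sum fun j hj => ?_
  obtain ⟨hl0, hlΛ⟩ := hlam j hj
  set x := |lam j * v j s|
  set y := |derIci (v j) s|
  have hx0 : 0 ≤ x := abs_nonneg _
  have hy0 : 0 ≤ y := abs_nonneg _
  have habs : |(lam j) ^ 2 * (2 * v j s * derIci (v j) s)| = lam j * (2 * x * y) := by
    simp only [x, y, abs_mul, abs_pow, abs_of_nonneg hl0, abs_two]; ring
  have hx2 : (lam j) ^ 2 * (v j s) ^ 2 = x ^ 2 := by simp only [x, sq_abs, mul_pow]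
  have hy2 : (derIci (v j) s) ^ 2 = y ^ 2 := (sq_abs _).symm
  have hamgm : ν * (2 * x * y) ≤ μ * x ^ 2 + y ^ 2 := by
    nlinarith [sq_nonneg (ν * x - y), mul_le_mul_of_nonneg_right hνμ (sq_nonneg x)]
  rw [habs, hx2, hy2, mul_left_comm]
  calc lam j * (ν * (2 * x * y)) ≤ lam j * (μ * x ^ 2 + y ^ 2) :=
        mul_le_mul_of_nonneg_left hamgm hl0
    _ ≤ Λ * (μ * x ^ 2 + y ^ 2) :=
        mul_le_mul_of_nonneg_right hlΛ ((by positivity : 0 ≤ ν * (2 * x * y)).trans hamgm)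
    _ = _ := by ring

end Sums

lemma sum_Ico_le_Rk {lam a b : ℕ → ℝ} (hab : InEnergy lam a b) (k n : ℕ) :
    ∑ i ∈ Finset.Ico (k + 1) (n + 1), ((b i) ^ 2 + (lam i) ^ 2 * (a i) ^ 2) ≤ Rk lam a b k := by
  have hsum : Summable fun i => if k < i then (b i) ^ 2 + (lam i) ^ 2 * (a i) ^ 2 else 0 :=
    hab.of_nonneg_of_le (fun i => by split <;> positivity) fun i => by
      split_ifs
      exacts [le_rfl, by positivity]
  refine le_of_eq_of_le (Finset.sum_congr rfl fun i hi => ?_)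
    (hsum.sum_le_tsum _ fun i _ => by split <;> positivity)
  rw [if_pos (by have := (Finset.mem_Ico.mp hi).1; omega)]

noncomputable def galerkinEnergy (lam : ℕ → ℝ) (m : ℝ → ℝ) (v : ℕ → ℝ → ℝ) (n : ℕ) (s : ℝ) : ℝ :=
  kineticSum v (Finset.range (n + 1)) s + Mfun m (potentialSum lam v (Finset.range (n + 1)) s)

noncomputable def tailEnergy (lam : ℕ → ℝ) (m : ℝ → ℝ) (v : ℕ → ℝ → ℝ) (k n : ℕ) (s : ℝ) : ℝ :=
  kineticSum v (Finset.Ico (k + 1) (n + 1)) s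
    + (Mfun m (potentialSum lam v (Finset.range (n + 1)) s)
      - Mfun m (potentialSum lam v (Finset.range (k + 1)) s))

section Energy

variable {lam : ℕ → ℝ} {m : ℝ → ℝ} {k n : ℕ} {v : ℕ → ℝ → ℝ} {μ : ℝ}

lemma hasDerivWithinAt_Mfun_potentialSum (hm : ContinuousOn m (Ici 0))
    (hv : ∀ i, ContDiffOn ℝ 2 (v i) (Ici 0)) (S : Finset ℕ) {s : ℝ} (hs : 0 ≤ s) :
    HasDerivWithinAt (fun r => Mfun m (potentialSum lam v S r))
      (m (potentialSum lam v S s) * potentialSumDeriv lam v S s) (Ici 0) s :=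
  (hasDerivWithinAt_Mfun hm (potentialSum_nonneg S s)).comp s
    (hasDerivWithinAt_potentialSum hv S hs) fun r _ => potentialSum_nonneg S r

lemma mul_potentialSum_add_kineticSum_le_galerkinEnergy (hm : ContinuousOn m (Ici 0))
    (hμ0 : 0 ≤ μ) (hμ : ∀ σ, 0 ≤ σ → μ ≤ m σ) {S : Finset ℕ} (hS : S ⊆ Finset.range (n + 1))
    (s : ℝ) : μ * potentialSum lam v S s + kineticSum v S s ≤ galerkinEnergy lam m v n s := by
  have hP := mul_le_mul_of_nonneg_left (potentialSum_mono (lam := lam) (v := v) hS s) hμ0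
  have hM := mul_le_Mfun hm hμ (potentialSum_nonneg (lam := lam) (v := v) (Finset.range (n + 1)) s)
  have hK := kineticSum_mono (v := v) hS s
  rw [galerkinEnergy]
  linarith

lemma mul_potentialSum_Ico_le_tailEnergy (hm : ContinuousOn m (Ici 0))
    (hμ : ∀ σ, 0 ≤ σ → μ ≤ m σ) (hkn : k ≤ n) (s : ℝ) :
    μ * potentialSum lam v (Finset.Ico (k + 1) (n + 1)) s ≤ tailEnergy lam m v k n s := by
  have h := mul_sub_le_Mfun_sub hm hμ (potentialSum_nonneg _ s)
    (potentialSum_range_le (lam := lam) (v := v) hkn s)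
  rw [potentialSum_sub_potentialSum hkn] at h
  rw [tailEnergy]
  linarith [kineticSum_nonneg (v := v) (Finset.Ico (k + 1) (n + 1)) s]

end Energy

namespace GalerkinSol

variable {lam : ℕ → ℝ} {m : ℝ → ℝ} {a b : ℕ → ℝ} {k n : ℕ} {v : ℕ → ℝ → ℝ} {s t μ₁ : ℝ}

lemma derIci_derIci_eq (hv : GalerkinSol lam m a b n v) {i : ℕ} (hi : i ≤ n) (hs : 0 ≤ s) :
    derIci (derIci (v i)) s
      = -(m (potentialSum lam v (Finset.range (n + 1)) s) * (lam i) ^ 2 * v i s) :=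
  eq_neg_of_add_eq_zero_left (hv.2.2.2.2 i hi s hs)

lemma hasDerivWithinAt_kineticSum (hv : GalerkinSol lam m a b n v) {S : Finset ℕ}
    (hS : S ⊆ Finset.range (n + 1)) (hs : 0 ≤ s) :
    HasDerivWithinAt (kineticSum v S)
      (-(m (potentialSum lam v (Finset.range (n + 1)) s) * potentialSumDeriv lam v S s))
      (Ici 0) s := by
  refine (HasDerivWithinAt.fun_sum fun i _ =>
    (hasDerivWithinAt_derIci_derIci (hv.1 i) hs).fun_pow 2).congr_deriv ?_
  rw [potentialSumDeriv, Finset.mul_sum, ← Finset.sum_neg_distrib]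
  refine Finset.sum_congr rfl fun i hi => ?_
  rw [hv.derIci_derIci_eq (Finset.mem_range_succ_iff.mp (hS hi)) hs]
  norm_num
  ring

lemma galerkinEnergy_eq (hv : GalerkinSol lam m a b n v) (hm : ContinuousOn m (Ici 0))
    (hs : 0 ≤ s) : galerkinEnergy lam m v n s = galerkinEnergy lam m v n 0 :=
  eq_of_hasDerivWithinAt_Ici_zero (fun _ hr =>
    ((hv.hasDerivWithinAt_kineticSum subset_rfl hr).add
      (hasDerivWithinAt_Mfun_potentialSum hm hv.1 _ hr)).congr_deriv (neg_add_cancel _)) hs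

lemma galerkinEnergy_zero_le (hv : GalerkinSol lam m a b n v) (hm : ContinuousOn m (Ici 0))
    (hm0 : ∀ σ, 0 ≤ σ → 0 ≤ m σ) (hab : InEnergy lam a b) :
    galerkinEnergy lam m v n 0 ≤ H0 lam m a b := by
  have hb : Summable fun i => (b i) ^ 2 :=
    hab.of_nonneg_of_le (fun _ => by positivity) fun _ => le_add_of_nonneg_right (by positivity)
  have ha : Summable fun i => (lam i) ^ 2 * (a i) ^ 2 :=
    hab.of_nonneg_of_le (fun _ => by positivity) fun _ => le_add_of_nonneg_left (by positivity)
  have hK : kineticSum v (Finset.range (n + 1)) 0 ≤ ∑' i, (b i) ^ 2 := by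
    rw [kineticSum, Finset.sum_congr rfl fun i hi => by
      rw [hv.2.2.1 i (Finset.mem_range_succ_iff.mp hi)]]
    exact hb.sum_le_tsum _ fun _ _ => by positivity
  have hP : potentialSum lam v (Finset.range (n + 1)) 0 ≤ ∑' i, (lam i) ^ 2 * (a i) ^ 2 := by
    rw [potentialSum, Finset.sum_congr rfl fun i hi => by
      rw [hv.2.1 i (Finset.mem_range_succ_iff.mp hi)]]
    exact ha.sum_le_tsum _ fun _ _ => by positivity
  have hM := mul_sub_le_Mfun_sub hm hm0 (potentialSum_nonneg _ _) hP
  rw [galerkinEnergy, H0]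
  linarith

lemma galerkinEnergy_le (hv : GalerkinSol lam m a b n v) (hm : ContinuousOn m (Ici 0))
    (hm0 : ∀ σ, 0 ≤ σ → 0 ≤ m σ) (hab : InEnergy lam a b) (hs : 0 ≤ s) :
    galerkinEnergy lam m v n s ≤ H0 lam m a b :=
  (hv.galerkinEnergy_eq hm hs).trans_le (hv.galerkinEnergy_zero_le hm hm0 hab)

lemma hasDerivWithinAt_tailEnergy (hv : GalerkinSol lam m a b n v) (hm : ContinuousOn m (Ici 0))
    (hkn : k ≤ n) (hs : 0 ≤ s) :
    HasDerivWithinAt (tailEnergy lam m v k n)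
      ((m (potentialSum lam v (Finset.range (n + 1)) s)
          - m (potentialSum lam v (Finset.range (k + 1)) s))
        * potentialSumDeriv lam v (Finset.range (k + 1)) s) (Ici 0) s := by
  have hS : Finset.Ico (k + 1) (n + 1) ⊆ Finset.range (n + 1) := fun i hi => by
    simp only [Finset.mem_Ico, Finset.mem_range] at hi ⊢
    exact hi.2
  refine ((hv.hasDerivWithinAt_kineticSum hS hs).add
    ((hasDerivWithinAt_Mfun_potentialSum hm hv.1 _ hs).sub
      (hasDerivWithinAt_Mfun_potentialSum hm hv.1 _ hs))).congr_deriv ?_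
  rw [← potentialSumDeriv_range_add_Ico hkn]
  ring

lemma tailEnergy_zero_le (hv : GalerkinSol lam m a b n v) (hm : ContinuousOn m (Ici 0))
    {μ₂ : ℝ} (hm_ub : ∀ σ, 0 ≤ σ → m σ ≤ μ₂) (hab : InEnergy lam a b) (hkn : k ≤ n) :
    tailEnergy lam m v k n 0 ≤ max 1 μ₂ * Rk lam a b k := by
  have hn : ∀ i ∈ Finset.Ico (k + 1) (n + 1), i ≤ n := fun i hi => by
    have := (Finset.mem_Ico.mp hi).2
    omega
  have hK : kineticSum v (Finset.Ico (k + 1) (n + 1)) 0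
      = ∑ i ∈ Finset.Ico (k + 1) (n + 1), (b i) ^ 2 :=
    Finset.sum_congr rfl fun i hi => by rw [hv.2.2.1 i (hn i hi)]
  have hP : potentialSum lam v (Finset.Ico (k + 1) (n + 1)) 0
      = ∑ i ∈ Finset.Ico (k + 1) (n + 1), (lam i) ^ 2 * (a i) ^ 2 :=
    Finset.sum_congr rfl fun i hi => by rw [hv.2.1 i (hn i hi)]
  have hM := Mfun_sub_le_mul_sub hm hm_ub (potentialSum_nonneg _ 0)
    (potentialSum_range_le (lam := lam) (v := v) hkn 0)
  rw [potentialSum_sub_potentialSum hkn, hP] at hM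
  have hmax : 0 ≤ max 1 μ₂ := zero_le_one.trans (le_max_left _ _)
  calc tailEnergy lam m v k n 0
      ≤ ∑ i ∈ Finset.Ico (k + 1) (n + 1), ((b i) ^ 2 + μ₂ * ((lam i) ^ 2 * (a i) ^ 2)) := by
        rw [tailEnergy, hK, Finset.sum_add_distrib, ← Finset.mul_sum]
        linarith
    _ ≤ ∑ i ∈ Finset.Ico (k + 1) (n + 1), max 1 μ₂ * ((b i) ^ 2 + (lam i) ^ 2 * (a i) ^ 2) :=
        Finset.sum_le_sum fun i _ => by
          nlinarith [mul_le_mul_of_nonneg_right (le_max_left 1 μ₂) (sq_nonneg (b i)),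
            mul_le_mul_of_nonneg_right (le_max_right 1 μ₂)
              (mul_nonneg (sq_nonneg (lam i)) (sq_nonneg (a i)))]
    _ ≤ max 1 μ₂ * Rk lam a b k := by
        rw [← Finset.mul_sum]
        exact mul_le_mul_of_nonneg_left (sum_Ico_le_Rk hab k n) hmax

lemma abs_deriv_tailEnergy_le (hv : GalerkinSol lam m a b n v) (hm : ContinuousOn m (Ici 0))
    (hlam : ∀ i, 0 ≤ lam i) (hmono : Monotone lam) {μ₁ L : ℝ} (hμ₁ : 0 < μ₁) (hL : 0 ≤ L)
    (hm_lb : ∀ σ, 0 ≤ σ → μ₁ ≤ m σ)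
    (hm_lip : ∀ σ₁ σ₂, 0 ≤ σ₁ → 0 ≤ σ₂ → |m σ₂ - m σ₁| ≤ L * |σ₂ - σ₁|)
    (hab : InEnergy lam a b) (hkn : k ≤ n) (hs : 0 ≤ s) :
    |(m (potentialSum lam v (Finset.range (n + 1)) s)
          - m (potentialSum lam v (Finset.range (k + 1)) s))
        * potentialSumDeriv lam v (Finset.range (k + 1)) s|
      ≤ L * H0 lam m a b * lam k / (min 1 μ₁) ^ 2 * tailEnergy lam m v k n s := by
  set ν := min 1 μ₁
  set P := potentialSum lam v (Finset.range (n + 1)) s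
  set A := potentialSum lam v (Finset.range (k + 1)) s
  set B := potentialSum lam v (Finset.Ico (k + 1) (n + 1)) s
  have hν : 0 < ν := lt_min one_pos hμ₁
  have hνμ : ν ≤ μ₁ := min_le_right _ _
  have hν2 : ν ^ 2 ≤ μ₁ := by nlinarith [min_le_left 1 μ₁]
  have hAP : A ≤ P := potentialSum_range_le hkn s
  have hdiff : |m P - m A| ≤ L * B := by
    have h := hm_lip A P (potentialSum_nonneg _ s) (potentialSum_nonneg _ s)
    rwa [abs_of_nonneg (sub_nonneg.mpr hAP), potentialSum_sub_potentialSum hkn] at h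
  have hE := hv.galerkinEnergy_le hm (fun σ hσ => hμ₁.le.trans (hm_lb σ hσ)) hab hs
  have hA' : ν * |potentialSumDeriv lam v (Finset.range (k + 1)) s| ≤ lam k * H0 lam m a b :=
    (mul_abs_potentialSumDeriv_le
      (fun j hj => ⟨hlam j, hmono (Finset.mem_range_succ_iff.mp hj)⟩) hν.le hν2 s).trans
      (mul_le_mul_of_nonneg_left ((mul_potentialSum_add_kineticSum_le_galerkinEnergy hm hμ₁.le
        hm_lb (Finset.range_subset_range.mpr (Nat.succ_le_succ hkn)) s).trans hE) (hlam k))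
  have hkH : 0 ≤ lam k * H0 lam m a b := (by positivity : 0 ≤ ν * |_|).trans hA'
  have hB : μ₁ * B ≤ tailEnergy lam m v k n s := mul_potentialSum_Ico_le_tailEnergy hm hm_lb hkn s
  rw [div_mul_eq_mul_div, le_div_iff₀ (by positivity), abs_mul]
  calc |m P - m A| * |potentialSumDeriv lam v (Finset.range (k + 1)) s| * ν ^ 2
      = (ν * |m P - m A|) * (ν * |potentialSumDeriv lam v (Finset.range (k + 1)) s|) := by ring
    _ ≤ (μ₁ * (L * B)) * (lam k * H0 lam m a b) :=
        mul_le_mul (mul_le_mul hνμ hdiff (abs_nonneg _) hμ₁.le) hA' (by positivity)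
          (mul_nonneg hμ₁.le (mul_nonneg hL (potentialSum_nonneg _ s)))
    _ = L * (μ₁ * B) * (lam k * H0 lam m a b) := by ring
    _ ≤ L * tailEnergy lam m v k n s * (lam k * H0 lam m a b) := by gcongr
    _ = L * H0 lam m a b * lam k * tailEnergy lam m v k n s := by ring


lemma potentialSum_le (hv : GalerkinSol lam m a b n v) (hm : ContinuousOn m (Ici 0))
    (hμ₁ : 0 < μ₁) (hm_lb : ∀ σ, 0 ≤ σ → μ₁ ≤ m σ) (hab : InEnergy lam a b)
    {S : Finset ℕ} (hS : S ⊆ Finset.range (n + 1)) (ht : 0 ≤ t) :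
    potentialSum lam v S t ≤ H0 lam m a b / min 1 μ₁ := by
  have hE := (mul_potentialSum_add_kineticSum_le_galerkinEnergy hm hμ₁.le hm_lb hS t).trans
    (hv.galerkinEnergy_le hm (fun σ hσ => hμ₁.le.trans (hm_lb σ hσ)) hab ht)
  have hν := mul_le_mul_of_nonneg_right (min_le_right 1 μ₁)
    (potentialSum_nonneg (lam := lam) (v := v) S t)
  rw [le_div_iff₀ (lt_min one_pos hμ₁), mul_comm]
  linarith [kineticSum_nonneg (v := v) S t]

lemma potentialSum_Ico_le (hv : GalerkinSol lam m a b n v) (hm : ContinuousOn m (Ici 0))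
    (hlam : ∀ i, 0 ≤ lam i) (hmono : Monotone lam) {μ₂ L : ℝ} (hμ₁ : 0 < μ₁) (hL : 0 ≤ L)
    (hm_lb : ∀ σ, 0 ≤ σ → μ₁ ≤ m σ) (hm_ub : ∀ σ, 0 ≤ σ → m σ ≤ μ₂)
    (hm_lip : ∀ σ₁ σ₂, 0 ≤ σ₁ → 0 ≤ σ₂ → |m σ₂ - m σ₁| ≤ L * |σ₂ - σ₁|)
    (hab : InEnergy lam a b) (hkn : k ≤ n) (ht : 0 ≤ t) :
    potentialSum lam v (Finset.Ico (k + 1) (n + 1)) t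
      ≤ Rk lam a b k * ((max 1 μ₂ / min 1 μ₁)
          * Real.exp (L * H0 lam m a b * lam k * t / (min 1 μ₁) ^ 2)) := by
  have hν : 0 < min 1 μ₁ := lt_min one_pos hμ₁
  have hF := le_mul_exp_of_abs_deriv_le (fun s hs => hv.hasDerivWithinAt_tailEnergy hm hkn hs)
    (fun s _ => (mul_nonneg hμ₁.le (potentialSum_nonneg _ s)).trans
      (mul_potentialSum_Ico_le_tailEnergy hm hm_lb hkn s))
    (fun s hs => hv.abs_deriv_tailEnergy_le hm hlam hmono hμ₁ hL hm_lb hm_lip hab hkn hs) ht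
  have hνB : min 1 μ₁ * potentialSum lam v (Finset.Ico (k + 1) (n + 1)) t
      ≤ max 1 μ₂ * Rk lam a b k * Real.exp (L * H0 lam m a b * lam k * t / (min 1 μ₁) ^ 2) := by
    rw [mul_div_right_comm]
    calc min 1 μ₁ * potentialSum lam v (Finset.Ico (k + 1) (n + 1)) t
        ≤ μ₁ * potentialSum lam v (Finset.Ico (k + 1) (n + 1)) t :=
          mul_le_mul_of_nonneg_right (min_le_right 1 μ₁) (potentialSum_nonneg _ t)
      _ ≤ tailEnergy lam m v k n t := mul_potentialSum_Ico_le_tailEnergy hm hm_lb hkn t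
      _ ≤ _ := hF.trans (mul_le_mul_of_nonneg_right (hv.tailEnergy_zero_le hm hm_ub hab hkn)
          (Real.exp_nonneg _))
  calc potentialSum lam v (Finset.Ico (k + 1) (n + 1)) t
      = min 1 μ₁ * potentialSum lam v (Finset.Ico (k + 1) (n + 1)) t / min 1 μ₁ := by
        field_simp
    _ ≤ max 1 μ₂ * Rk lam a b k * Real.exp (L * H0 lam m a b * lam k * t / (min 1 μ₁) ^ 2)
          / min 1 μ₁ := by gcongr
    _ = _ := by ring

end GalerkinSol

theorem stmt11_general (lam : ℕ → ℝ) (hpos : ∀ i, 0 < lam i) (hmono : Monotone lam)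
    (μ₁ μ₂ L : ℝ) (hμ₁ : 0 < μ₁) (hL : 0 < L) (m : ℝ → ℝ)
    (hm_reg : ContDiffOn ℝ 1 m (Set.Ici 0))
    (hm_lb : ∀ σ, 0 ≤ σ → μ₁ ≤ m σ) (hm_ub : ∀ σ, 0 ≤ σ → m σ ≤ μ₂)
    (hm_lip : ∀ σ₁ σ₂, 0 ≤ σ₁ → 0 ≤ σ₂ → |m σ₂ - m σ₁| ≤ L * |σ₂ - σ₁|)
    (a b : ℕ → ℝ) (hab : InEnergy lam a b)
    (k n m' : ℕ) (hkn : k < n) (hkm : k < m')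
    (v w : ℕ → ℝ → ℝ)
    (hv : GalerkinSol lam m a b n v) (hw : GalerkinSol lam m a b m' w) :
    ∀ t, 0 ≤ t →
      |(∑ i ∈ Finset.range (m' + 1), (lam i) ^ 2 * (w i t) ^ 2)
          - (∑ i ∈ Finset.range (n + 1), (lam i) ^ 2 * (v i t) ^ 2)|
        ≤ 2 * Real.sqrt (H0 lam m a b / min 1 μ₁)
            * Real.sqrt (∑ i ∈ Finset.range (k + 1), (lam i) ^ 2 * (v i t - w i t) ^ 2)
          + 2 * Rk lam a b k *
            ((max 1 μ₂ / min 1 μ₁)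
              * Real.exp (L * H0 lam m a b * lam k * t / (min 1 μ₁) ^ 2)) := by
  intro t ht
  have hm : ContinuousOn m (Ici 0) := hm_reg.continuousOn
  have hlam : ∀ i, 0 ≤ lam i := fun i => (hpos i).le
  have hlow : |potentialSum lam w (Finset.range (k + 1)) t
        - potentialSum lam v (Finset.range (k + 1)) t|
      ≤ 2 * Real.sqrt (H0 lam m a b / min 1 μ₁)
        * Real.sqrt (∑ i ∈ Finset.range (k + 1), (lam i) ^ 2 * (v i t - w i t) ^ 2) :=
    abs_sum_sq_sub_sum_sq_le (Finset.range (k + 1)) lam (v · t) (w · t)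
    (hv.potentialSum_le hm hμ₁ hm_lb hab (Finset.range_subset_range.mpr (by omega)) ht)
    (hw.potentialSum_le hm hμ₁ hm_lb hab (Finset.range_subset_range.mpr (by omega)) ht)
  have hv_tail := hv.potentialSum_Ico_le hm hlam hmono hμ₁ hL.le hm_lb hm_ub hm_lip hab hkn.le ht
  have hw_tail := hw.potentialSum_Ico_le hm hlam hmono hμ₁ hL.le hm_lb hm_ub hm_lip hab hkm.le ht
  change |potentialSum lam w _ t - potentialSum lam v _ t| ≤ _
  rw [← potentialSum_range_add_Ico hkn.le, ← potentialSum_range_add_Ico hkm.le]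
  have hv_tail₀ := potentialSum_nonneg (lam := lam) (v := v) (Finset.Ico (k + 1) (n + 1)) t
  have hw_tail₀ := potentialSum_nonneg (lam := lam) (v := w) (Finset.Ico (k + 1) (m' + 1)) t
  rw [abs_le] at hlow ⊢
  constructor <;> linarith

/-- estimate for the difference of the nonlinear coefficients of two
Galerkin approximations of orders n > k and m' > k. -/
theorem stmt11 (lam : ℕ → ℝ) (hpos : ∀ i, 0 < lam i) (hmono : Monotone lam)
    (htop : Tendsto lam atTop atTop)
    (μ₁ μ₂ L : ℝ) (hμ₁ : 0 < μ₁) (hL : 0 < L) (m : ℝ → ℝ)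
    (hm_reg : ContDiffOn ℝ 1 m (Set.Ici 0))
    (hm_lb : ∀ σ, 0 ≤ σ → μ₁ ≤ m σ) (hm_ub : ∀ σ, 0 ≤ σ → m σ ≤ μ₂)
    (hm_lip : ∀ σ₁ σ₂, 0 ≤ σ₁ → 0 ≤ σ₂ → |m σ₂ - m σ₁| ≤ L * |σ₂ - σ₁|)
    (a b : ℕ → ℝ) (hab : InEnergy lam a b)
    (k n m' : ℕ) (hk : 0 < k) (hkn : k < n) (hkm : k < m')
    (v w : ℕ → ℝ → ℝ)
    (hv : GalerkinSol lam m a b n v) (hw : GalerkinSol lam m a b m' w) :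
    ∀ t, 0 ≤ t →
      |(∑ i ∈ Finset.range (m' + 1), (lam i) ^ 2 * (w i t) ^ 2)
          - (∑ i ∈ Finset.range (n + 1), (lam i) ^ 2 * (v i t) ^ 2)|
        ≤ 2 * Real.sqrt (H0 lam m a b / min 1 μ₁)
            * Real.sqrt (∑ i ∈ Finset.range (k + 1), (lam i) ^ 2 * (v i t - w i t) ^ 2)
          + 2 * Rk lam a b k *
            ((max 1 μ₂ / min 1 μ₁)
              * Real.exp (L * H0 lam m a b * lam k * t / (min 1 μ₁) ^ 2)) :=
  stmt11_general lam hpos hmono μ₁ μ₂ L hμ₁ hL m hm_reg hm_lb hm_ub hm_lip a b hab k n m' hkn hkm v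
    w hv hw
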